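/- arXiv:2002.03486 — 5 statements merged into one kernel-verified Lean document; each statement's English description precedes it below -/
import Mathlib

section
/- Let ν be a group whose abelianization is infinite cyclic, and let κ ≅ ℤ be a central subgroup of ν such that the quotient G = ν/κ is normally generated by a single element (has weight 1). If the abelianization of G is cyclic of order e with e ∈ {0,1,2,3,4,6}, then ν is normally generated by a single element (has weight 1). -/
/-!
Lift a normal generator `g` of `G = ν ⧸ κ` to `x : ν`. Since `G^ab ≅ ℤ/e` has only the units
`±1`, the images in `G^ab` of `x` and of a generator `u` of `ν^ab ≅ ℤ` agree up to inversion; as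
the kernel of `ν^ab → G^ab` is the image of `κ`, correcting `x` by an element of `κ` makes it map
to `u^{±1}`. The normal closure `N` of the corrected lift still maps onto `G`, so `N κ = ν`; as `κ`
is central, `ν ⧸ N` is abelian and `N` contains `[ν, ν]`. Together with `ν^ab = ⟨x⟩` this gives
`N = ν`.
-/

/-- A group has weight 1 if it is the normal closure of a single element. -/
def HasWeightOne (G : Type*) [Group G] : Prop :=
  ∃ g : G, Subgroup.normalClosure {g} = ⊤

open Subgroup

namespace Abelianization
variable {G : Type*} [Group G]

theorem of_surjective : Function.Surjective (of : G →* Abelianization G) :=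
  QuotientGroup.mk'_surjective _

theorem ker_map_mk' (K : Subgroup G) [K.Normal] :
    (map (QuotientGroup.mk' K)).ker = K.map of := by
  have hcomp : (map (QuotientGroup.mk' K)).comp of = of.comp (QuotientGroup.mk' K) :=
    MonoidHom.ext (map_of _)
  have hcomm : commutator (G ⧸ K) = (commutator G).map (QuotientGroup.mk' K) := by
    rw [map_commutator_eq, (MonoidHom.range_eq_top).mpr (QuotientGroup.mk'_surjective K),
      commutator_def]
  rw [← map_comap_eq_self_of_surjective of_surjective (map _).ker, MonoidHom.comap_ker, hcomp,
    ← MonoidHom.comap_ker, ker_of, hcomm, comap_map_eq, QuotientGroup.ker_mk', Subgroup.map_sup,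
    (Subgroup.map_eq_bot_iff _).mpr (ker_of (G := G)).ge, bot_sup_eq]

theorem zpowers_of_eq_top {g : G} (hg : normalClosure {g} = ⊤) : zpowers (of g) = ⊤ := by
  rw [eq_top_iff, ← map_top_of_surjective _ of_surjective, ← hg, map_le_iff_le_comap]
  exact normalClosure_le_normal (Set.singleton_subset_iff.mpr (mem_zpowers _))

theorem map_surjective {H : Type*} [Group H] {f : G →* H} (hf : Function.Surjective f) :
    Function.Surjective (map f) := by
  intro z
  obtain ⟨y, rfl⟩ := (of_surjective.comp hf) z
  exact ⟨of y, map_of f y⟩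

end Abelianization

lemma ZMod.eq_one_or_eq_neg_one_of_isUnit {e : ℕ} (he : e ∈ ({0, 1, 2, 3, 4, 6} : Set ℕ))
    {z : ZMod e} (hz : IsUnit z) : z = 1 ∨ z = -1 := by
  simp only [Set.mem_insert_iff, Set.mem_singleton_iff] at he
  rcases he with rfl | rfl | rfl | rfl | rfl | rfl
  · exact Int.isUnit_iff.mp hz
  all_goals revert hz; revert z; decide

lemma Multiplicative.isUnit_toAdd_of_zpowers_eq_top {R : Type*} [CommRing R] {a : Multiplicative R}
    (ha : zpowers a = ⊤) : IsUnit a.toAdd := by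
  obtain ⟨n, hn⟩ := mem_zpowers_iff.mp (ha ▸ mem_top (ofAdd (1 : R)))
  refine IsUnit.of_mul_eq_one_right (n : R) ?_
  rw [← zsmul_eq_mul, ← toAdd_zpow, hn, toAdd_ofAdd]

lemma eq_or_eq_inv_of_zpowers_eq_top {H : Type*} [Group H] {e : ℕ}
    (he : e ∈ ({0, 1, 2, 3, 4, 6} : Set ℕ)) (ψ : H ≃* Multiplicative (ZMod e)) {a b : H}
    (ha : zpowers a = ⊤) (hb : zpowers b = ⊤) : a = b ∨ a = b⁻¹ := by
  have hgen : ∀ c : H, zpowers c = ⊤ → (ψ c).toAdd = 1 ∨ (ψ c).toAdd = -1 := fun c hc =>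
    ZMod.eq_one_or_eq_neg_one_of_isUnit he <| Multiplicative.isUnit_toAdd_of_zpowers_eq_top <| by
      rw [← ψ.coe_toMonoidHom, ← MonoidHom.map_zpowers, hc, map_top_of_surjective _ ψ.surjective]
  have hψ : (ψ a).toAdd = (ψ b).toAdd ∨ (ψ a).toAdd = -(ψ b).toAdd := by
    rcases hgen a ha with h1 | h1 <;> rcases hgen b hb with h2 | h2 <;> simp [h1, h2]
  rcases hψ with h | h
  · exact Or.inl (ψ.injective (Multiplicative.toAdd.injective h))
  · refine Or.inr (ψ.injective (Multiplicative.toAdd.injective ?_))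
    rw [h, map_inv, toAdd_inv]

section
open Abelianization
variable {ν : Type*} [Group ν] {κ : Subgroup ν} [κ.Normal]

theorem exists_mem_of_zpowers_of_mul_eq_top [IsCyclic (Abelianization ν)] {e : ℕ}
    (he : e ∈ ({0, 1, 2, 3, 4, 6} : Set ℕ))
    (ψ : Abelianization (ν ⧸ κ) ≃* Multiplicative (ZMod e)) {x : ν}
    (hx : zpowers (of (QuotientGroup.mk' κ x)) = ⊤) : ∃ k ∈ κ, zpowers (of (x * k)) = ⊤ := by
  set q := Abelianization.map (QuotientGroup.mk' κ)
  obtain ⟨u, hu⟩ := isCyclic_iff_exists_zpowers_eq_top.mp ‹IsCyclic (Abelianization ν)›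
  have hqu : zpowers (q u) = ⊤ := by
    rw [← MonoidHom.map_zpowers, hu,
      map_top_of_surjective _ (map_surjective (QuotientGroup.mk'_surjective κ))]
  obtain ⟨w, hw, hqw⟩ : ∃ w, zpowers w = ⊤ ∧ q (of x) = q w := by
    rcases eq_or_eq_inv_of_zpowers_eq_top he ψ (a := q (of x)) hx hqu with h | h
    · exact ⟨u, hu, h⟩
    · exact ⟨u⁻¹, by rwa [zpowers_inv], by rw [h, map_inv]⟩
  have hker : of x * w⁻¹ ∈ q.ker := by
    rw [MonoidHom.mem_ker, map_mul, map_inv, hqw, mul_inv_cancel]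
  rw [ker_map_mk'] at hker
  obtain ⟨k, hk, hkw⟩ := hker
  refine ⟨k⁻¹, inv_mem hk, ?_⟩
  rwa [map_mul, map_inv, hkw, mul_inv_rev, inv_inv, mul_comm w, mul_inv_cancel_left]

theorem normalClosure_eq_top_of_le_center (hκ : κ ≤ center ν) {x : ν}
    (hx : normalClosure {QuotientGroup.mk' κ x} = ⊤) (hab : zpowers (of x) = ⊤) :
    normalClosure {x} = ⊤ := by
  have hsup : normalClosure {x} ⊔ κ = ⊤ := by
    rw [← QuotientGroup.ker_mk' κ, ← comap_map_eq,
      map_normalClosure _ _ (QuotientGroup.mk'_surjective κ), Set.image_singleton, hx, comap_top]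
  have hcomm : commutator ν ≤ normalClosure {x} :=
    Normal.commutator_le_of_self_sup_commutative_eq_top (H := center ν)
      (top_le_iff.mp (hsup ▸ sup_le_sup_left hκ _)) inferInstance
  rw [eq_top_iff, ← comap_top of, ← hab, ← MonoidHom.map_zpowers, comap_map_eq, ker_of]
  exact sup_le (zpowers_le.mpr (subset_normalClosure rfl)) hcomm

end

theorem stmt0_general (ν : Type*) [Group ν]
    (hab : Nonempty (Abelianization ν ≃* Multiplicative ℤ))
    (κ : Subgroup ν) (hcentral : κ ≤ Subgroup.center ν) [κ.Normal]
    (hG : HasWeightOne (ν ⧸ κ))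
    (e : ℕ) (he : e ∈ ({0, 1, 2, 3, 4, 6} : Set ℕ))
    (hGab : Nonempty (Abelianization (ν ⧸ κ) ≃* Multiplicative (ZMod e))) :
    HasWeightOne ν := by
  obtain ⟨φ⟩ := hab
  obtain ⟨ψ⟩ := hGab
  obtain ⟨g, hg⟩ := hG
  have : IsCyclic (Abelianization ν) := φ.isCyclic.mpr inferInstance
  obtain ⟨x, rfl⟩ := QuotientGroup.mk'_surjective κ g
  obtain ⟨k, hk, hxk⟩ :=
    exists_mem_of_zpowers_of_mul_eq_top he ψ (Abelianization.zpowers_of_eq_top hg)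
  refine ⟨x * k, normalClosure_eq_top_of_le_center hcentral ?_ hxk⟩
  rwa [map_mul, show QuotientGroup.mk' κ k = 1 from (QuotientGroup.eq_one_iff k).mpr hk, mul_one]

theorem stmt0 (ν : Type*) [Group ν]
    (hab : Nonempty (Abelianization ν ≃* Multiplicative ℤ))
    (κ : Subgroup ν) (hcentral : κ ≤ Subgroup.center ν) [κ.Normal]
    (hκ : Nonempty (κ ≃* Multiplicative ℤ))
    (hG : HasWeightOne (ν ⧸ κ))
    (e : ℕ) (he : e ∈ ({0, 1, 2, 3, 4, 6} : Set ℕ))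
    (hGab : Nonempty (Abelianization (ν ⧸ κ) ≃* Multiplicative (ZMod e))) :
    HasWeightOne ν :=
  stmt0_general ν hab κ hcentral hG e he hGab
end

section
/- Let E be a group extension of G by a normal subgroup S that is abelian (or more generally solvable), such that the induced map on abelianizations E/[E,E] → G/[G,G] is an isomorphism. If G has weight 1, then E has weight 1. -/
/-!
Lift a normal generator `g` of `G` to `e ∈ E` and let `N` be the normal closure of `e`.
Since `φ N = G`, we get `N ⊔ ker φ = E`, so `E ⧸ N` is a quotient of the solvable group `ker φ`.
Since `Ab(E) → Ab(G)` is injective and the image of `N` in `Ab(E)` maps onto `Ab(G)`, we get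
`N ⊔ [E, E] = E`, so `E ⧸ N` is perfect. A solvable perfect group is trivial, hence `N = E`.
-/

open QuotientGroup

section

variable {E : Type*} [Group E]

theorem Subgroup.sup_ker_eq_top_of_map_eq_top {H : Type*} [Group H] {f : E →* H}
    {N : Subgroup E} (h : N.map f = ⊤) : N ⊔ f.ker = ⊤ := by
  rw [← Subgroup.comap_map_eq, h, Subgroup.comap_top]

theorem Abelianization.of_surjective_s2 : Function.Surjective (of : E →* Abelianization E) :=
  QuotientGroup.mk_surjective

theorem Abelianization.sup_commutator_eq_top_of_map_injective {G : Type*} [Group G] {φ : E →* G}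
    (hφ : Function.Injective (map φ)) {N : Subgroup E} (h : N.map φ = ⊤) :
    N ⊔ commutator E = ⊤ := by
  have hN : (N.map of).map (map φ) = ⊤ := by
    rw [Subgroup.map_map, show (map φ).comp of = of.comp φ from rfl, ← Subgroup.map_map, h,
      Subgroup.map_top_of_surjective _ of_surjective_s2]
  rw [← ker_of, ← Subgroup.comap_map_eq,
    ← Subgroup.comap_map_eq_self_of_injective hφ (N.map _), hN, Subgroup.comap_top,
    Subgroup.comap_top]

variable (N : Subgroup E) [N.Normal]

theorem QuotientGroup.map_mk'_eq_top_of_sup_eq_top {K : Subgroup E} (h : N ⊔ K = ⊤) :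
    K.map (mk' N) = ⊤ := by
  rw [← bot_sup_eq (K.map _), ← map_mk'_self N, ← Subgroup.map_sup, h,
    Subgroup.map_top_of_surjective _ (mk'_surjective N)]

theorem QuotientGroup.isSolvable_of_sup_eq_top (K : Subgroup E) [Group.IsSolvable K]
    (h : N ⊔ K = ⊤) : Group.IsSolvable (E ⧸ N) := by
  refine Group.isSolvable_of_surjective (f := (mk' N).comp K.subtype) ?_
  rw [← MonoidHom.range_eq_top, ← MonoidHom.map_range, Subgroup.range_subtype,
    map_mk'_eq_top_of_sup_eq_top N h]

theorem QuotientGroup.commutator_eq_top_of_sup_eq_top (h : N ⊔ commutator E = ⊤) :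
    commutator (E ⧸ N) = ⊤ := by
  rw [← map_mk'_eq_top_of_sup_eq_top N h, commutator_def, commutator_def,
    Subgroup.map_commutator, Subgroup.map_top_of_surjective _ (mk'_surjective N)]

end

theorem Group.IsSolvable.subsingleton_of_commutator_eq_top {G : Type*} [Group G]
    [Group.IsSolvable G] (h : commutator G = ⊤) : Subsingleton G := by
  by_contra hG
  rw [not_subsingleton_iff_nontrivial] at hG
  exact (Group.IsSolvable.commutator_lt_top_of_nontrivial G).ne h

theorem eq_top_of_sup_eq_top_of_sup_commutator_eq_top {E : Type*} [Group E] (N : Subgroup E)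
    [N.Normal] (K : Subgroup E) [Group.IsSolvable K] (hK : N ⊔ K = ⊤)
    (hc : N ⊔ commutator E = ⊤) : N = ⊤ := by
  have := isSolvable_of_sup_eq_top N K hK
  exact QuotientGroup.subsingleton_iff.mp
    (Group.IsSolvable.subsingleton_of_commutator_eq_top (commutator_eq_top_of_sup_eq_top N hc))

theorem stmt2 (E G : Type*) [Group E] [Group G] (φ : E →* G)
    (hsurj : Function.Surjective φ) (hsolv : IsSolvable φ.ker)
    (hab : Function.Bijective
      (Abelianization.lift ((Abelianization.of : G →* Abelianization G).comp φ) :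
        Abelianization E →* Abelianization G))
    (hG : HasWeightOne G) :
    HasWeightOne E := by
  obtain ⟨g, hg⟩ := hG
  obtain ⟨e, rfl⟩ := hsurj g
  refine ⟨e, ?_⟩
  have hmap : (Subgroup.normalClosure {e}).map φ = ⊤ := by
    rw [Subgroup.map_normalClosure _ _ hsurj, Set.image_singleton, hg]
  have : Group.IsSolvable φ.ker := hsolv
  exact eq_top_of_sup_eq_top_of_sup_commutator_eq_top _ φ.ker
    (Subgroup.sup_ker_eq_top_of_map_eq_top hmap)
    (Abelianization.sup_commutator_eq_top_of_map_injective hab.1 hmap)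
end

section
/- Let p, q, r be positive integers with gcd(p,q,r) = 1, p | q·r, q | p·r, r | p·q, and p odd. Then there exist integers a, b, c with gcd(a,p) = gcd(b,q) = gcd(c,r) = 1, a·q·r + b·p·r + c·p·q = 0, and gcd(a·q − b·p, 2·a·r + c·p, 2·b·r + c·q) = 1. -/
/-!
The divisibility conditions force `p = y * z`, `q = z * x`, `r = x * y` with `x = gcd q r`,
`y = gcd r p`, `z = gcd p q` pairwise coprime, and `z` is odd because `p` is. By the Chinese
remainder theorem there is `b` inverting `y` modulo `x` and `2 * y` modulo `z`, i.e.
`a * x - b * y = -1` and `2 * b * y + c * z = 1` for some `a`, `c`. These two relations make the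
three gcd conditions on `a`, `b`, `c` immediate and turn `a * q - b * p`, `2 * a * r + c * p`,
`2 * b * r + c * q` into `-z`, `-y`, `x`.
-/

theorem isCoprime_gcd_gcd_of_isUnit {p q r : ℤ} (h : ∀ d : ℤ, d ∣ p → d ∣ q → d ∣ r → IsUnit d) :
    IsCoprime (p.gcd q : ℤ) (p.gcd r) := by
  have hunit := h _ ((Int.gcd_dvd_left _ _).trans (Int.gcd_dvd_left p q))
    ((Int.gcd_dvd_left _ _).trans (Int.gcd_dvd_right p q))
    ((Int.gcd_dvd_right _ _).trans (Int.gcd_dvd_right p r))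
  rw [Int.isUnit_iff_natAbs_eq, Int.natAbs_natCast] at hunit
  exact Int.isCoprime_iff_gcd_eq_one.mpr hunit

theorem eq_gcd_mul_gcd_of_dvd_mul {p q r : ℤ} (hp : 0 ≤ p)
    (h : ∀ d : ℤ, d ∣ p → d ∣ q → d ∣ r → IsUnit d) (hpd : p ∣ q * r) :
    p = p.gcd q * p.gcd r := by
  refine Int.dvd_antisymm hp (by positivity) ?_ ((isCoprime_gcd_gcd_of_isUnit h).mul_dvd
    (Int.gcd_dvd_left _ _) (Int.gcd_dvd_left _ _))
  calc p = p.gcd (q * r) := by rw [Int.gcd_eq_natAbs_left hpd, Int.natAbs_of_nonneg hp]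
    _ ∣ p.gcd q * p.gcd r := by simpa only [Int.coe_gcd] using gcd_mul_dvd_mul_gcd p q r

theorem exists_pairwise_coprime_of_dvd_mul {p q r : ℤ} (hp : 0 ≤ p) (hq : 0 ≤ q) (hr : 0 ≤ r)
    (h : ∀ d : ℤ, d ∣ p → d ∣ q → d ∣ r → IsUnit d)
    (hpd : p ∣ q * r) (hqd : q ∣ p * r) (hrd : r ∣ p * q) :
    ∃ x y z : ℤ, p = y * z ∧ q = z * x ∧ r = x * y ∧
      IsCoprime x y ∧ IsCoprime y z ∧ IsCoprime z x := by
  have hq' : ∀ d : ℤ, d ∣ q → d ∣ p → d ∣ r → IsUnit d := fun d hdq hdp hdr => h d hdp hdq hdr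
  have hr' : ∀ d : ℤ, d ∣ r → d ∣ p → d ∣ q → IsUnit d := fun d hdr hdp hdq => h d hdp hdq hdr
  refine ⟨q.gcd r, r.gcd p, p.gcd q, ?_, ?_, ?_, ?_, ?_, ?_⟩
  · rw [Int.gcd_comm r p, mul_comm]; exact eq_gcd_mul_gcd_of_dvd_mul hp h hpd
  · rw [Int.gcd_comm p q]; exact eq_gcd_mul_gcd_of_dvd_mul hq hq' hqd
  · rw [Int.gcd_comm q r, mul_comm]; exact eq_gcd_mul_gcd_of_dvd_mul hr hr' hrd
  · rw [Int.gcd_comm q r]; exact (isCoprime_gcd_gcd_of_isUnit hr').symm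
  · rw [Int.gcd_comm r p]; exact (isCoprime_gcd_gcd_of_isUnit h).symm
  · rw [Int.gcd_comm p q]; exact isCoprime_gcd_gcd_of_isUnit hq'

theorem exists_mul_sub_mul_eq_neg_one_of_isCoprime {x y z : ℤ} (hxy : IsCoprime x y)
    (hyz : IsCoprime y z) (hzx : IsCoprime z x) (hz : Odd z) :
    ∃ a b c : ℤ, a * x - b * y = -1 ∧ 2 * b * y + c * z = 1 := by
  obtain ⟨s, t, hst⟩ := hxy.symm
  obtain ⟨s', t', hst'⟩ := (Int.isCoprime_two_left.mpr hz).mul_left hyz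
  obtain ⟨m, n, hmn⟩ := hzx
  -- `b` is `s = y⁻¹` modulo `x` and `s' = (2y)⁻¹` modulo `z`, glued by `m * z + n * x = 1`
  refine ⟨-n - t * m * z + s' * y * n, s * m * z + s' * n * x, m - 2 * s * y * m + t' * n * x,
    ?_, ?_⟩
  · linear_combination -hmn - m * z * hst
  · linear_combination hmn + n * x * hst'

theorem stmt5 (p q r : ℤ) (hp : 0 < p) (hq : 0 < q) (hr : 0 < r)
    (hgcd : Int.gcd p (Int.gcd q r : ℤ) = 1)
    (hpd : p ∣ q * r) (hqd : q ∣ p * r) (hrd : r ∣ p * q)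
    (hodd : Odd p) :
    ∃ a b c : ℤ, Int.gcd a p = 1 ∧ Int.gcd b q = 1 ∧ Int.gcd c r = 1 ∧
      a * q * r + b * p * r + c * p * q = 0 ∧
      Int.gcd (a * q - b * p) (Int.gcd (2 * a * r + c * p) (2 * b * r + c * q) : ℤ) = 1 := by
  have hunit : ∀ d : ℤ, d ∣ p → d ∣ q → d ∣ r → IsUnit d := fun d hdp hdq hdr =>
    isUnit_of_dvd_one (by simpa [hgcd] using Int.dvd_coe_gcd hdp (Int.dvd_coe_gcd hdq hdr))
  obtain ⟨x, y, z, rfl, rfl, rfl, hxy, hyz, hzx⟩ :=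
    exists_pairwise_coprime_of_dvd_mul hp.le hq.le hr.le hunit hpd hqd hrd
  obtain ⟨a, b, c, hab, hbc⟩ :=
    exists_mul_sub_mul_eq_neg_one_of_isCoprime hxy hyz hzx (Int.odd_mul.mp hodd).2
  have hac : 2 * a * x + c * z = -1 := by linear_combination 2 * hab + hbc
  refine ⟨a, b, c, ?_, ?_, ?_, ?_, ?_⟩
  · exact Int.isCoprime_iff_gcd_eq_one.mp <| IsCoprime.mul_right
      ⟨-x, b, by linear_combination -hab⟩ ⟨-2 * x, -c, by linear_combination -hac⟩
  · exact Int.isCoprime_iff_gcd_eq_one.mp <| IsCoprime.mul_right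
      ⟨2 * y, c, by linear_combination hbc⟩ ⟨y, -a, by linear_combination -hab⟩
  · exact Int.isCoprime_iff_gcd_eq_one.mp <| IsCoprime.mul_right
      ⟨-z, -2 * a, by linear_combination -hac⟩ ⟨z, 2 * b, by linear_combination hbc⟩
  · linear_combination x * y * z * (hab + hbc)
  · have hz : a * (z * x) - b * (y * z) = -z := by linear_combination z * hab
    have hy : 2 * a * (x * y) + c * (y * z) = -y := by linear_combination y * hac
    have hx : 2 * b * (x * y) + c * (z * x) = x := by linear_combination x * hbc
    rw [hz, hy, hx, Int.neg_gcd, Int.neg_gcd, Int.isCoprime_iff_gcd_eq_one.mp hxy.symm,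
      Nat.cast_one, Int.gcd_one_right]
end

section
/- Let p, q, r, s be positive integers with gcd(p,q) = 1 and gcd(r,s) = 1, and suppose there exist integers a, b, c, d with gcd(a,p) = gcd(b,q) = gcd(c,r) = gcd(d,s) = 1 and a·q·r·s + b·p·r·s + c·p·q·s + d·p·q·r = 0, and gcd(pq, pr, ps, qr, qs, rs) = 1. Then there exist positive integers p_r, p_s, q_r, q_s and signs ε_r, ε_s ∈ {1,−1} with p = p_r·p_s, q = q_r·q_s, r = ε_r·p_r·q_r, and s = ε_s·p_s·q_s. -/
/-!
The relation is `a/p + b/q + c/r + d/s = 0` with denominators cleared, so `p` divides `a * q * r * s`,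
hence `r * s` as `p` is coprime to `a` and `q`; likewise `q ∣ r * s`, `r ∣ p * q` and `s ∣ p * q`.
As `r` and `s` are coprime, `p` splits as `gcd(p, r) * gcd(p, s)`, and likewise for `q`, `r`, `s`;
so `p_r = gcd(p, r)`, `p_s = gcd(p, s)`, `q_r = gcd(q, r)`, `q_s = gcd(q, s)` and the signs of
`r` and `s` do the job.
-/

theorem dvd_mul_of_add_add_add_eq_zero {R : Type*} [CommRing R] {p q r s a b c d : R}
    (hap : IsCoprime a p) (hpq : IsCoprime p q)
    (h0 : a * q * r * s + b * p * r * s + c * p * q * s + d * p * q * r = 0) : p ∣ r * s := by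
  have h : p ∣ a * q * (r * s) :=
    ⟨-(b * r * s + c * q * s + d * q * r), by linear_combination h0⟩
  exact (hap.symm.mul_right hpq).dvd_of_dvd_mul_left h

theorem Nat.eq_gcd_mul_gcd_of_dvd_mul {p q r s : ℕ} (hpq : p.Coprime q) (hrs : r.Coprime s)
    (hp : p ∣ r * s) (hq : q ∣ r * s) (hr : r ∣ p * q) (hs : s ∣ p * q) :
    p = p.gcd r * p.gcd s ∧ q = q.gcd r * q.gcd s ∧
      r = p.gcd r * q.gcd r ∧ s = p.gcd s * q.gcd s := by
  refine ⟨((gcd_mul_gcd_eq_iff_dvd_mul_of_coprime hrs).mpr hp).symm,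
    ((gcd_mul_gcd_eq_iff_dvd_mul_of_coprime hrs).mpr hq).symm, ?_, ?_⟩
  · rw [p.gcd_comm, q.gcd_comm]
    exact ((gcd_mul_gcd_eq_iff_dvd_mul_of_coprime hpq).mpr hr).symm
  · rw [p.gcd_comm, q.gcd_comm]
    exact ((gcd_mul_gcd_eq_iff_dvd_mul_of_coprime hpq).mpr hs).symm

theorem Int.sign_eq_one_or_neg_one_of_ne_zero {z : ℤ} (hz : z ≠ 0) : z.sign = 1 ∨ z.sign = -1 :=
  isUnit_iff.mp (isUnit_iff_natAbs_eq.mpr (natAbs_sign_of_ne_zero hz))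

theorem stmt7_general (p q r s : ℤ) (hp : 0 < p) (hq : 0 < q)
    (hpq : Int.gcd p q = 1) (hrs : Int.gcd r s = 1)
    (a b c d : ℤ)
    (hap : Int.gcd a p = 1) (hbq : Int.gcd b q = 1)
    (hcr : Int.gcd c r = 1) (hds : Int.gcd d s = 1)
    (h0 : a * q * r * s + b * p * r * s + c * p * q * s + d * p * q * r = 0) :
    ∃ (pr ps qr qs εr εs : ℤ), 0 < pr ∧ 0 < ps ∧ 0 < qr ∧ 0 < qs ∧
      (εr = 1 ∨ εr = -1) ∧ (εs = 1 ∨ εs = -1) ∧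
      p = pr * ps ∧ q = qr * qs ∧ r = εr * (pr * qr) ∧ s = εs * (ps * qs) := by
  simp only [← Int.isCoprime_iff_gcd_eq_one] at hpq hrs hap hbq hcr hds
  have hp_dvd : p ∣ r * s := dvd_mul_of_add_add_add_eq_zero hap hpq h0
  have hq_dvd : q ∣ r * s := dvd_mul_of_add_add_add_eq_zero (b := a) (c := c) (d := d) hbq hpq.symm
    (by linear_combination h0)
  have hr_dvd : r ∣ p * q := dvd_mul_of_add_add_add_eq_zero (b := d) (c := a) (d := b) hcr hrs
    (by linear_combination h0)
  have hs_dvd : s ∣ p * q := dvd_mul_of_add_add_add_eq_zero (b := c) (c := a) (d := b) hds hrs.symm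
    (by linear_combination h0)
  have hpq0 : p * q ≠ 0 := by positivity
  obtain ⟨eP, eQ, eR, eS⟩ := Nat.eq_gcd_mul_gcd_of_dvd_mul (Int.isCoprime_iff_gcd_eq_one.mp hpq)
    (Int.isCoprime_iff_gcd_eq_one.mp hrs)
    (by simpa [Int.natAbs_mul] using Int.natAbs_dvd_natAbs.mpr hp_dvd)
    (by simpa [Int.natAbs_mul] using Int.natAbs_dvd_natAbs.mpr hq_dvd)
    (by simpa [Int.natAbs_mul] using Int.natAbs_dvd_natAbs.mpr hr_dvd)
    (by simpa [Int.natAbs_mul] using Int.natAbs_dvd_natAbs.mpr hs_dvd)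
  refine ⟨p.gcd r, p.gcd s, q.gcd r, q.gcd s, r.sign, s.sign,
    by positivity, by positivity, by positivity, by positivity,
    Int.sign_eq_one_or_neg_one_of_ne_zero (ne_zero_of_dvd_ne_zero hpq0 hr_dvd),
    Int.sign_eq_one_or_neg_one_of_ne_zero (ne_zero_of_dvd_ne_zero hpq0 hs_dvd), ?_, ?_, ?_, ?_⟩
  · exact (Int.natAbs_of_nonneg hp.le).symm.trans (by exact_mod_cast eP)
  · exact (Int.natAbs_of_nonneg hq.le).symm.trans (by exact_mod_cast eQ)
  · exact r.sign_mul_natAbs.symm.trans (congrArg (r.sign * ·) (by exact_mod_cast eR))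
  · exact s.sign_mul_natAbs.symm.trans (congrArg (s.sign * ·) (by exact_mod_cast eS))

theorem stmt7 (p q r s : ℤ) (hp : 0 < p) (hq : 0 < q) (hr : 0 < r) (hs : 0 < s)
    (hpq : Int.gcd p q = 1) (hrs : Int.gcd r s = 1)
    (a b c d : ℤ)
    (hap : Int.gcd a p = 1) (hbq : Int.gcd b q = 1)
    (hcr : Int.gcd c r = 1) (hds : Int.gcd d s = 1)
    (h0 : a * q * r * s + b * p * r * s + c * p * q * s + d * p * q * r = 0)
    (hE1 : Int.gcd (p * q) (Int.gcd (p * r) (Int.gcd (p * s)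
      (Int.gcd (q * r) (Int.gcd (q * s) (r * s) : ℤ) : ℤ) : ℤ) : ℤ) = 1) :
    ∃ (pr ps qr qs εr εs : ℤ), 0 < pr ∧ 0 < ps ∧ 0 < qr ∧ 0 < qs ∧
      (εr = 1 ∨ εr = -1) ∧ (εs = 1 ∨ εs = -1) ∧
      p = pr * ps ∧ q = qr * qs ∧ r = εr * (pr * qr) ∧ s = εs * (ps * qs) :=
  stmt7_general p q r s hp hq hpq hrs a b c d hap hbq hcr hds h0
end

section
/- Let G be the group with presentation ⟨t, u, v, w ∣ u^a = t^e, v^b = t^f, w^2 = t, w·u·v = u·v·w, t central⟩ with a, b odd, gcd(a,b) = 1, and 2·(a·f − b·e) + a·b = ±1. Then the quotient of G by the normal closure of u⁻¹·w·v is trivial; i.e., u⁻¹wv is a weight element for G. -/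
/-! Once `u = wv`, the relation `wuv = uvw` says that `w` commutes with `v²`; it also commutes
with `v^b = t^f = w^{2f}`, so for odd `b` it commutes with `v`. In the abelian group generated by
`w` and `v` the relations `(wv)^a = w^{2e}` and `v^b = w^{2f}` have exponent matrix
`[[a - 2e, a], [-2f, b]]`, of determinant `2(af - be) + ab = ±1`, so `w = 1`. Then
`v^a = v^b = 1` with `gcd(a, b) = 1` gives `v = 1`, and `t = w²`, `u = wv` are trivial too. -/

open FreeGroup commutatorElement in
/-- Relators for ⟨t,u,v,w ∣ u^a = t^e, v^b = t^f, w^2 = t, wuv = uvw, t central⟩,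
with generators indexed as 0 = t, 1 = u, 2 = v, 3 = w. -/
def dABRels (a b e f : ℤ) : Set (FreeGroup (Fin 4)) :=
  { of 1 ^ a * (of 0 ^ e)⁻¹, of 2 ^ b * (of 0 ^ f)⁻¹, of 3 ^ (2 : ℤ) * (of 0)⁻¹,
    of 3 * of 1 * of 2 * (of 1 * of 2 * of 3)⁻¹,
    ⁅(of 0 : FreeGroup (Fin 4)), of 1⁆, ⁅(of 0 : FreeGroup (Fin 4)), of 2⁆,
    ⁅(of 0 : FreeGroup (Fin 4)), of 3⁆ }

section Relations

variable {Q : Type*} [Group Q]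

theorem Commute.of_zpow_two_of_zpow_odd {g h : Q} {b : ℤ} (hb : Odd b)
    (h2 : Commute g (h ^ (2 : ℤ))) (hodd : Commute g (h ^ b)) : Commute g h := by
  obtain ⟨k, rfl⟩ := hb
  have h_eq : h = h ^ (2 * k + 1) * (h ^ (2 : ℤ)) ^ (-k) := by
    rw [← zpow_mul, ← zpow_add]; ring_nf; rw [zpow_one]
  rw [h_eq]
  exact hodd.mul_right (h2.zpow_right _)

theorem eq_one_of_zpow_eq_one_of_gcd_eq_one {g : Q} {a b : ℤ} (hab : Int.gcd a b = 1)
    (ha : g ^ a = 1) (hb : g ^ b = 1) : g = 1 := by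
  have hdvd : orderOf g ∣ Int.gcd a b :=
    Int.dvd_gcd (orderOf_dvd_iff_zpow_eq_one.2 ha) (orderOf_dvd_iff_zpow_eq_one.2 hb)
  rw [hab, Nat.dvd_one, orderOf_eq_one_iff] at hdvd
  exact hdvd

theorem eq_one_of_commute_of_unit_det {W V : Q} {a b e f : ℤ} (hWV : Commute W V)
    (ha : (W * V) ^ a = W ^ (2 * e)) (hb : V ^ b = W ^ (2 * f))
    (hdet : IsUnit (2 * (a * f - b * e) + a * b)) : W = 1 := by
  have hVa : V ^ a = W ^ (2 * e - a) := by
    rw [hWV.mul_zpow] at ha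
    rw [sub_eq_add_neg, zpow_add, ← ha, zpow_neg, eq_mul_inv_iff_mul_eq]
    exact (hWV.zpow_zpow a a).eq.symm
  have hdet_one : W ^ (2 * (a * f - b * e) + a * b) = 1 :=
    calc W ^ (2 * (a * f - b * e) + a * b)
        = (W ^ (2 * e - a)) ^ (-b) * (W ^ (2 * f)) ^ a := by
          rw [← zpow_mul, ← zpow_mul, ← zpow_add]; ring_nf
      _ = V ^ (a * -b + b * a) := by rw [← hVa, ← hb, ← zpow_mul, ← zpow_mul, ← zpow_add]
      _ = 1 := by rw [show a * -b + b * a = 0 by ring, zpow_zero]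
  calc W = W ^ ((2 * (a * f - b * e) + a * b) * (2 * (a * f - b * e) + a * b)) := by
        rw [Int.isUnit_mul_self hdet, zpow_one]
    _ = 1 := by rw [zpow_mul, hdet_one, one_zpow]

theorem eq_one_of_dAB_relations {a b e f : ℤ} (hbodd : Odd b) (hab : Int.gcd a b = 1)
    (hdet : IsUnit (2 * (a * f - b * e) + a * b)) {T U V W : Q}
    (hU : U ^ a = T ^ e) (hV : V ^ b = T ^ f) (hW : W ^ (2 : ℤ) = T)
    (hWUV : W * U * V = U * V * W) (hUWV : U = W * V) :
    T = 1 ∧ U = 1 ∧ V = 1 ∧ W = 1 := by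
  subst hW hUWV
  have hWV2 : Commute W (V ^ (2 : ℤ)) := by
    rw [zpow_two]
    exact mul_left_cancel (a := W) (by simpa only [mul_assoc] using hWUV)
  have hWV : Commute W V :=
    hWV2.of_zpow_two_of_zpow_odd hbodd (hV ▸ ((Commute.refl W).zpow_right _).zpow_right _)
  have hW1 : W = 1 := eq_one_of_commute_of_unit_det hWV (by rw [hU, ← zpow_mul])
    (by rw [hV, ← zpow_mul]) hdet
  subst hW1
  have hV1 : V = 1 := eq_one_of_zpow_eq_one_of_gcd_eq_one hab
    (by simpa using hU) (by simpa using hV)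
  subst hV1
  simp

end Relations

theorem dABRels.hom_eq_one {Q : Type*} [Group Q] {a b e f : ℤ} (hbodd : Odd b)
    (hab : Int.gcd a b = 1) (hdet : IsUnit (2 * (a * f - b * e) + a * b))
    (φ : PresentedGroup (dABRels a b e f) →* Q)
    (hφ : φ ((PresentedGroup.of 1)⁻¹ * PresentedGroup.of 3 * PresentedGroup.of 2) = 1) :
    φ = 1 := by
  have hrel : ∀ r ∈ dABRels a b e f, φ (PresentedGroup.mk _ r) = 1 := fun r hr => by
    rw [PresentedGroup.one_of_mem hr, map_one]
  have hU := hrel (FreeGroup.of 1 ^ a * (FreeGroup.of 0 ^ e)⁻¹) (by simp [dABRels])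
  have hV := hrel (FreeGroup.of 2 ^ b * (FreeGroup.of 0 ^ f)⁻¹) (by simp [dABRels])
  have hW := hrel (FreeGroup.of 3 ^ (2 : ℤ) * (FreeGroup.of 0)⁻¹) (by simp [dABRels])
  have hWUV := hrel (FreeGroup.of 3 * FreeGroup.of 1 * FreeGroup.of 2 *
    (FreeGroup.of 1 * FreeGroup.of 2 * FreeGroup.of 3)⁻¹) (by simp [dABRels])
  simp only [map_mul, map_inv, map_zpow, mul_inv_eq_one] at hU hV hW hWUV
  rw [map_mul, map_mul, map_inv, mul_assoc, inv_mul_eq_one] at hφ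
  obtain ⟨hT1, hU1, hV1, hW1⟩ := eq_one_of_dAB_relations hbodd hab hdet hU hV hW hWUV hφ
  ext i
  fin_cases i
  exacts [hT1, hU1, hV1, hW1]

theorem stmt14_general (a b e f : ℤ) (hbodd : Odd b)
    (hab : Int.gcd a b = 1)
    (hunit : 2 * (a * f - b * e) + a * b = 1 ∨ 2 * (a * f - b * e) + a * b = -1) :
    Subgroup.normalClosure
        ({(PresentedGroup.of 1 : PresentedGroup (dABRels a b e f))⁻¹ *
          PresentedGroup.of 3 * PresentedGroup.of 2} :
          Set (PresentedGroup (dABRels a b e f))) = ⊤ := by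
  set N := Subgroup.normalClosure
    ({(PresentedGroup.of 1 : PresentedGroup (dABRels a b e f))⁻¹ *
      PresentedGroup.of 3 * PresentedGroup.of 2} : Set (PresentedGroup (dABRels a b e f)))
  have hmk : QuotientGroup.mk' N = 1 :=
    dABRels.hom_eq_one hbodd hab (Int.isUnit_iff.2 hunit) _
      ((QuotientGroup.eq_one_iff _).2 (Subgroup.subset_normalClosure rfl))
  rw [← QuotientGroup.ker_mk' N, hmk, MonoidHom.ker_one]

theorem stmt14 (a b e f : ℤ) (haodd : Odd a) (hbodd : Odd b)
    (hab : Int.gcd a b = 1)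
    (hunit : 2 * (a * f - b * e) + a * b = 1 ∨ 2 * (a * f - b * e) + a * b = -1) :
    Subgroup.normalClosure
        ({(PresentedGroup.of 1 : PresentedGroup (dABRels a b e f))⁻¹ *
          PresentedGroup.of 3 * PresentedGroup.of 2} :
          Set (PresentedGroup (dABRels a b e f))) = ⊤ :=
  stmt14_general a b e f hbodd hab hunit
end
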